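/- arXiv:1501.07805 — 6 statements merged into one kernel-verified Lean document; each statement's English description precedes it below -/
import Mathlib

section
/- Let A be an m×n real matrix, I ∈ ℝ^m, BG ∈ ℝ^m, L > 0 a real number, and x ∈ ℝ^n such that (Ax)_i + BG_i/L ≠ 0 for every i. Then the KL-KKT residual functional satisfies the scaling identity P(L·I, BG, L·x) = L² · P(I, BG/L, x). (Scaling of P in Lemma 2, stated at the level of an arbitrary vector x.) -/
/-- The KL-KKT residual functional `P(I, BG, x)`. -/
noncomputable def klkktP {m n : ℕ} (A : Matrix (Fin m) (Fin n) ℝ)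
    (I BG : Fin m → ℝ) (x : Fin n → ℝ) : ℝ :=
  ∑ j, (x j * ∑ i, A i j * (1 - I i / (A.mulVec x i + BG i))) ^ 2

/-- Scaling of `P` in Lemma 2: `P(L·I, BG, L·x) = L² · P(I, BG/L, x)`. -/
theorem klkktP_scaling {m n : ℕ} (A : Matrix (Fin m) (Fin n) ℝ)
    (I BG : Fin m → ℝ) (L : ℝ) (hL : 0 < L) (x : Fin n → ℝ)
    (hden : ∀ i, A.mulVec x i + BG i / L ≠ 0) :
    klkktP A (L • I) BG (L • x) = L ^ 2 * klkktP A I (L⁻¹ • BG) x := by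
  have hL0 : L ≠ 0 := ne_of_gt hL
  unfold klkktP
  rw [Finset.mul_sum]
  refine Finset.sum_congr rfl fun j _ => ?_
  have hfrac : ∀ i, L * I i / (L * A.mulVec x i + BG i)
      = I i / (A.mulVec x i + L⁻¹ * BG i) := by
    intro i
    rw [show L * A.mulVec x i + BG i = L * (A.mulVec x i + L⁻¹ * BG i) by
      field_simp]
    rw [mul_div_mul_left _ _ hL0]
  simp only [Matrix.mulVec_smul, Pi.smul_apply, smul_eq_mul, hfrac]
  ring
end

section
/- Let A be an m×n real matrix with nonnegative entries whose columns are normalized so that Σ_{i=1}^m A_{ij} = 1 for every j = 1, …, n. Let I ∈ ℝ^m have nonnegative entries, BG ∈ ℝ^m have nonnegative entries, and x ∈ ℝ^n have nonnegative entries with (Ax)_i + BG_i > 0 for every i. Then the next EM iterate y = ψ_{I,BG}(x) satisfies the flux inequality Σ_{i=1}^m (Ay)_i ≤ Σ_{i=1}^m I_i. (Lemma 3, inequality part.) -/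
/-- The EM (Expectation Maximization) iteration map `ψ_{I,BG}`. -/
noncomputable def emStep {m n : ℕ} (A : Matrix (Fin m) (Fin n) ℝ) (I BG : Fin m → ℝ)
    (x : Fin n → ℝ) : Fin n → ℝ :=
  fun j => x j * ∑ i, A i j * I i / (A.mulVec x i + BG i)

/-- Lemma 3, inequality part: the next EM iterate `y = ψ_{I,BG}(x)` satisfies
the flux inequality `Σ_i (Ay)_i ≤ Σ_i I_i`. -/
theorem em_flux_inequality {m n : ℕ} (A : Matrix (Fin m) (Fin n) ℝ)
    (hA : ∀ i j, 0 ≤ A i j) (hnorm : ∀ j, ∑ i, A i j = 1)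
    (I : Fin m → ℝ) (hI : ∀ i, 0 ≤ I i)
    (BG : Fin m → ℝ) (hBG : ∀ i, 0 ≤ BG i)
    (x : Fin n → ℝ) (hx : ∀ j, 0 ≤ x j)
    (hden : ∀ i, 0 < A.mulVec x i + BG i) :
    ∑ i, A.mulVec (emStep A I BG x) i ≤ ∑ i, I i := by
  set y := emStep A I BG x with hy
  have h1 : ∑ i, A.mulVec y i = ∑ j, y j := by
    simp only [Matrix.mulVec, dotProduct]
    rw [Finset.sum_comm]
    refine Finset.sum_congr rfl fun j _ => ?_
    rw [← Finset.sum_mul, hnorm j, one_mul]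
  have h2 : ∑ j, y j = ∑ i, I i * (A.mulVec x i / (A.mulVec x i + BG i)) := by
    simp only [hy, emStep, Finset.mul_sum]
    rw [Finset.sum_comm]
    refine Finset.sum_congr rfl fun i _ => ?_
    rw [Matrix.mulVec, dotProduct, Finset.sum_div, Finset.mul_sum]
    refine Finset.sum_congr rfl fun j _ => ?_
    field_simp
  rw [h1, h2]
  refine Finset.sum_le_sum fun i _ => ?_
  exact mul_le_of_le_one_right (hI i)
    ((div_le_one (hden i)).mpr (le_add_of_nonneg_right (hBG i)))
end

section
/- Let A be an m×n real matrix with nonnegative entries whose columns are normalized so that Σ_{i=1}^m A_{ij} = 1 for every j. Let I ∈ ℝ^m have strictly positive entries, BG ∈ ℝ^m have nonnegative entries, and x ∈ ℝ^n have strictly positive entries with (Ax)_i > 0 for every i. If the next EM iterate y = ψ_{I,BG}(x) satisfies the flux equality Σ_{i=1}^m (Ay)_i = Σ_{i=1}^m I_i, then BG = 0. (Lemma 3, equality case: the flux is preserved only when the background vanishes.) -/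
/-- Lemma 3, equality case: if the next EM iterate preserves the total flux,
then the background vanishes. -/
theorem em_flux_equality_iff_no_background {m n : ℕ} (A : Matrix (Fin m) (Fin n) ℝ)
    (hA : ∀ i j, 0 ≤ A i j) (hnorm : ∀ j, ∑ i, A i j = 1)
    (I : Fin m → ℝ) (hI : ∀ i, 0 < I i)
    (BG : Fin m → ℝ) (hBG : ∀ i, 0 ≤ BG i)
    (x : Fin n → ℝ) (hx : ∀ j, 0 < x j)
    (hAx : ∀ i, 0 < A.mulVec x i)
    (heq : ∑ i, A.mulVec (emStep A I BG x) i = ∑ i, I i) :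
    BG = 0 := by
  have hDpos : ∀ i, 0 < A.mulVec x i + BG i :=
    fun i => add_pos_of_pos_of_nonneg (hAx i) (hBG i)
  -- rewrite total flux
  have key : ∑ i, A.mulVec (emStep A I BG x) i
      = ∑ i, A.mulVec x i * I i / (A.mulVec x i + BG i) := by
    have h1 : ∑ i, A.mulVec (emStep A I BG x) i = ∑ j, emStep A I BG x j := by
      simp only [Matrix.mulVec, dotProduct]
      rw [Finset.sum_comm]
      refine Finset.sum_congr rfl fun j _ => ?_
      rw [← Finset.sum_mul, hnorm j, one_mul]
    rw [h1]
    simp only [emStep, Finset.mul_sum]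
    rw [Finset.sum_comm]
    refine Finset.sum_congr rfl fun i _ => ?_
    rw [mul_div_assoc,
      show (∑ j, x j * (A i j * I i / (A.mulVec x i + BG i)))
          = ∑ j, A i j * x j * (I i / (A.mulVec x i + BG i)) from
        Finset.sum_congr rfl fun j _ => by ring,
      ← Finset.sum_mul]
    rfl
  rw [key] at heq
  have hle : ∀ i ∈ Finset.univ,
      A.mulVec x i * I i / (A.mulVec x i + BG i) ≤ I i := by
    intro i _
    rw [div_le_iff₀ (hDpos i)]
    nlinarith [(hI i).le, hAx i, hBG i]
  have hterm := (Finset.sum_eq_sum_iff_of_le hle).mp heq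
  funext i
  have hi := hterm i (Finset.mem_univ i)
  have hDi := hDpos i
  have h2 : A.mulVec x i * I i = I i * (A.mulVec x i + BG i) := by
    field_simp at hi
    linarith [hi]
  have hBGi : BG i * I i = 0 := by nlinarith
  have := (mul_eq_zero.mp hBGi).resolve_right (ne_of_gt (hI i))
  simpa using this
end

section
/- Let A be an m×n real matrix with nonnegative entries whose columns are normalized so that Σ_{i=1}^m A_{ij} = 1 for every j. Let I ∈ ℝ^m have nonnegative entries, BG ∈ ℝ^m have nonnegative entries, and x ∈ ℝ^n have nonnegative entries with (Ax)_i + BG_i > 0 for every i. Let y = ψ_{I,BG}(x) be the next EM iterate and assume (Ay)_i + BG_i > 0 for every i. Then the KL-KKT normalization functional is bounded above by the total flux: Q(BG, y) = Σ_{i=1}^m (Ay)_i² / ((Ay)_i + BG_i) ≤ Σ_{i=1}^m I_i. (Upper bound of Lemma 4.) -/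
/-- Upper bound of Lemma 4: the KL-KKT normalization functional evaluated at the
next EM iterate is bounded above by the total observed flux:
`Q(BG, y) = Σ_i (Ay)_i²/((Ay)_i + BG_i) ≤ Σ_i I_i`. -/
theorem klkktQ_upper_bound {m n : ℕ} (A : Matrix (Fin m) (Fin n) ℝ)
    (hA : ∀ i j, 0 ≤ A i j) (hnorm : ∀ j, ∑ i, A i j = 1)
    (I : Fin m → ℝ) (hI : ∀ i, 0 ≤ I i)
    (BG : Fin m → ℝ) (hBG : ∀ i, 0 ≤ BG i)
    (x : Fin n → ℝ) (hx : ∀ j, 0 ≤ x j)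
    (hden : ∀ i, 0 < A.mulVec x i + BG i)
    (y : Fin n → ℝ) (hy : y = emStep A I BG x)
    (hdeny : ∀ i, 0 < A.mulVec y i + BG i) :
    ∑ i, (A.mulVec y i) ^ 2 / (A.mulVec y i + BG i) ≤ ∑ i, I i := by
  have hy0 : ∀ j, 0 ≤ y j := by
    intro j
    rw [hy]
    exact mul_nonneg (hx j) (Finset.sum_nonneg fun i _ =>
      div_nonneg (mul_nonneg (hA i j) (hI i)) (hden i).le)
  have hAy : ∀ i, 0 ≤ A.mulVec y i := by
    intro i
    simp only [Matrix.mulVec, dotProduct]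
    exact Finset.sum_nonneg fun j _ => mul_nonneg (hA i j) (hy0 j)
  have step1 : ∑ i, (A.mulVec y i) ^ 2 / (A.mulVec y i + BG i) ≤ ∑ i, A.mulVec y i := by
    refine Finset.sum_le_sum fun i _ => ?_
    rw [div_le_iff₀ (hdeny i)]
    nlinarith [hAy i, hBG i]
  refine le_trans step1 ?_
  have hswap : ∑ i, A.mulVec y i = ∑ j, y j := by
    simp only [Matrix.mulVec, dotProduct]
    rw [Finset.sum_comm]
    refine Finset.sum_congr rfl fun j _ => ?_
    rw [← Finset.sum_mul, hnorm j, one_mul]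
  rw [hswap]
  calc ∑ j, y j = ∑ i, I i / (A.mulVec x i + BG i) * A.mulVec x i := by
        simp only [hy, emStep, Finset.mul_sum]
        rw [Finset.sum_comm]
        refine Finset.sum_congr rfl fun i _ => ?_
        rw [Matrix.mulVec, dotProduct, Finset.mul_sum]
        refine Finset.sum_congr rfl fun j _ => ?_
        ring
    _ ≤ ∑ i, I i := by
        refine Finset.sum_le_sum fun i _ => ?_
        rw [div_mul_eq_mul_div]
        rw [div_le_iff₀ (hden i)]
        have hAx : 0 ≤ A.mulVec x i := by
          simp only [Matrix.mulVec, dotProduct]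
          exact Finset.sum_nonneg fun j _ => mul_nonneg (hA i j) (hx j)
        nlinarith [hI i, hBG i]
end

section
/- Let A be an m×n real matrix with nonnegative entries whose columns are normalized so that Σ_{i=1}^m A_{ij} = 1 for every j. Let I ∈ ℝ^m have nonnegative entries, BG ∈ ℝ^m have nonnegative entries, x ∈ ℝ^n have nonnegative entries with (Ax)_i + BG_i > 0 for every i, and let y = ψ_{I,BG}(x) with (Ay)_i + BG_i > 0 for every i. If Σ_i I_i + max_i BG_i > 0, then Q(BG, y) = Σ_{i=1}^m (Ay)_i² / ((Ay)_i + BG_i) ≥ (Σ_{i=1}^m (Ay)_i)² / ( m · ( Σ_{i=1}^m I_i + max_{1≤i≤m} BG_i ) ). (Lower bound of Lemma 4: each denominator (Ay)_i + BG_i is at most the total flux Σ I_i plus the sup-norm of the background, by the flux inequality.) -/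
/-- Lower bound of Lemma 4: the KL-KKT normalization functional evaluated at the
next EM iterate is bounded below by
`(Σ_i (Ay)_i)² / (m · (Σ_i I_i + max_i BG_i))`. -/
theorem klkktQ_lower_bound {m n : ℕ} (hm : 0 < m) (A : Matrix (Fin m) (Fin n) ℝ)
    (hA : ∀ i j, 0 ≤ A i j) (hnorm : ∀ j, ∑ i, A i j = 1)
    (I : Fin m → ℝ) (hI : ∀ i, 0 ≤ I i)
    (BG : Fin m → ℝ) (hBG : ∀ i, 0 ≤ BG i)
    (x : Fin n → ℝ) (hx : ∀ j, 0 ≤ x j)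
    (hden : ∀ i, 0 < A.mulVec x i + BG i)
    (y : Fin n → ℝ) (hy : y = emStep A I BG x)
    (hdeny : ∀ i, 0 < A.mulVec y i + BG i)
    (hposflux : 0 < ∑ i, I i +
      Finset.univ.sup' (Finset.univ_nonempty_iff.mpr ⟨⟨0, hm⟩⟩) BG) :
    (∑ i, A.mulVec y i) ^ 2 /
        (m * (∑ i, I i + Finset.univ.sup' (Finset.univ_nonempty_iff.mpr ⟨⟨0, hm⟩⟩) BG))
      ≤ ∑ i, (A.mulVec y i) ^ 2 / (A.mulVec y i + BG i) := by
  set C := ∑ i, I i + Finset.univ.sup' (Finset.univ_nonempty_iff.mpr ⟨⟨0, hm⟩⟩) BG with hC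
  -- nonnegativity of y
  have hy0 : ∀ j, 0 ≤ y j := by
    intro j
    rw [hy]
    exact mul_nonneg (hx j) (Finset.sum_nonneg fun i _ =>
      div_nonneg (mul_nonneg (hA i j) (hI i)) (hden i).le)
  have ha0 : ∀ i, 0 ≤ A.mulVec y i := by
    intro i
    simpa [Matrix.mulVec, dotProduct] using
      Finset.sum_nonneg fun j (_ : j ∈ Finset.univ) => mul_nonneg (hA i j) (hy0 j)
  -- flux inequality : ∑ (Ay) = ∑ y ≤ ∑ I
  have hflux : ∑ i, A.mulVec y i ≤ ∑ i, I i := by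
    have h1 : ∑ i, A.mulVec y i = ∑ j, y j := by
      simp only [Matrix.mulVec, dotProduct]
      rw [Finset.sum_comm]
      refine Finset.sum_congr rfl fun j _ => ?_
      rw [← Finset.sum_mul, hnorm j, one_mul]
    rw [h1]
    have h2 : ∑ j, y j = ∑ i, (A.mulVec x i) * I i / (A.mulVec x i + BG i) := by
      simp only [hy, emStep, Finset.mul_sum]
      rw [Finset.sum_comm]
      refine Finset.sum_congr rfl fun i _ => ?_
      simp only [Matrix.mulVec, dotProduct, Finset.sum_mul, Finset.sum_div]
      refine Finset.sum_congr rfl fun j _ => ?_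
      field_simp
    rw [h2]
    refine Finset.sum_le_sum fun i _ => ?_
    rw [div_le_iff₀ (hden i)]
    have : A.mulVec x i ≤ A.mulVec x i + BG i := le_add_of_nonneg_right (hBG i)
    calc A.mulVec x i * I i ≤ (A.mulVec x i + BG i) * I i :=
          mul_le_mul_of_nonneg_right this (hI i)
      _ = I i * (A.mulVec x i + BG i) := by ring
  -- each denominator ≤ C
  have hdle : ∀ i, A.mulVec y i + BG i ≤ C := by
    intro i
    have h1 : A.mulVec y i ≤ ∑ k, A.mulVec y k :=
      Finset.single_le_sum (fun k _ => ha0 k) (Finset.mem_univ i)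
    have h2 : BG i ≤ Finset.univ.sup' (Finset.univ_nonempty_iff.mpr ⟨⟨0, hm⟩⟩) BG :=
      Finset.le_sup' BG (Finset.mem_univ i)
    exact add_le_add (h1.trans hflux) h2
  have hdsum : ∑ i, (A.mulVec y i + BG i) ≤ m * C := by
    calc ∑ i, (A.mulVec y i + BG i) ≤ ∑ _i : Fin m, C :=
          Finset.sum_le_sum fun i _ => hdle i
      _ = m * C := by simp [mul_comm]
  have hdsumpos : 0 < ∑ i, (A.mulVec y i + BG i) :=
    Finset.sum_pos (fun i _ => hdeny i) (Finset.univ_nonempty_iff.mpr ⟨⟨0, hm⟩⟩)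
  calc (∑ i, A.mulVec y i) ^ 2 / (m * C)
      ≤ (∑ i, A.mulVec y i) ^ 2 / ∑ i, (A.mulVec y i + BG i) :=
        div_le_div_of_nonneg_left (sq_nonneg _) hdsumpos hdsum
    _ ≤ ∑ i, (A.mulVec y i) ^ 2 / (A.mulVec y i + BG i) :=
        Finset.sq_sum_div_le_sum_sq_div _ _ fun i _ => hdeny i
end

section
/- Let A be an m×n real matrix with nonnegative entries whose columns are normalized so that Σ_{i=1}^m A_{ij} = 1 for every j, let I ∈ ℝ^m have nonnegative entries with total flux L = Σ_{i=1}^m I_i > 0, let BG ∈ ℝ^m have nonnegative entries, let x ∈ ℝ^n have nonnegative entries with (Ax)_i + BG_i > 0 for every i, and let y = ψ_{I,BG}(x) with (Ay)_i + BG_i > 0 for every i. If the KL-KKT stopping condition P(I, BG, y) ≤ τ · Q(BG, y) holds for some τ > 0, then the KL-KKT residual of the flux-normalized problem satisfies P(I/L, BG/L, y/L) ≤ τ / L. In particular, the normalized KL-KKT residual at the stopped EM iterate tends to 0 as the total flux L tends to infinity. (Quantitative core of the main theorem: combine the scaling identities of Lemma 2 with the bound Q(BG, y) ≤ Σ_i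 I_i of Lemma 4.) -/
/-- The KL-KKT normalization functional `Q(BG, x)`. -/
noncomputable def klkktQ {m n : ℕ} (A : Matrix (Fin m) (Fin n) ℝ)
    (BG : Fin m → ℝ) (x : Fin n → ℝ) : ℝ :=
  ∑ i, (A.mulVec x i) ^ 2 / (A.mulVec x i + BG i)

/-- Quantitative core of the main theorem: if the KL-KKT stopping condition
`P(I, BG, y) ≤ τ·Q(BG, y)` holds at the EM iterate `y = ψ_{I,BG}(x)`, then the
residual of the flux-normalized problem satisfies
`P(I/L, BG/L, y/L) ≤ τ/L`, where `L = Σ_i I_i` is the total flux. -/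
theorem klkkt_stopped_residual_bound {m n : ℕ} (A : Matrix (Fin m) (Fin n) ℝ)
    (hA : ∀ i j, 0 ≤ A i j) (hnorm : ∀ j, ∑ i, A i j = 1)
    (I : Fin m → ℝ) (hI : ∀ i, 0 ≤ I i) (hL : 0 < ∑ i, I i)
    (BG : Fin m → ℝ) (hBG : ∀ i, 0 ≤ BG i)
    (x : Fin n → ℝ) (hx : ∀ j, 0 ≤ x j)
    (hden : ∀ i, 0 < A.mulVec x i + BG i)
    (y : Fin n → ℝ) (hy : y = emStep A I BG x)
    (hdeny : ∀ i, 0 < A.mulVec y i + BG i)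
    (τ : ℝ) (hτ : 0 < τ)
    (hstop : klkktP A I BG y ≤ τ * klkktQ A BG y) :
    klkktP A ((∑ i, I i)⁻¹ • I) ((∑ i, I i)⁻¹ • BG) ((∑ i, I i)⁻¹ • y)
      ≤ τ / (∑ i, I i) := by

  set L := ∑ i, I i with hLdef
  have hL0 : L ≠ 0 := ne_of_gt hL
  have hy0 : ∀ j, 0 ≤ y j := by
    intro j; rw [hy]; unfold emStep
    exact mul_nonneg (hx j) (Finset.sum_nonneg fun i _ =>
      div_nonneg (mul_nonneg (hA i j) (hI i)) (hden i).le)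
  have hAy0 : ∀ i, 0 ≤ A.mulVec y i := by
    intro i
    simp only [Matrix.mulVec, dotProduct]
    exact Finset.sum_nonneg fun j _ => mul_nonneg (hA i j) (hy0 j)
  have hsumAy : ∑ i, A.mulVec y i = ∑ j, y j := by
    simp only [Matrix.mulVec, dotProduct]
    rw [Finset.sum_comm]
    refine Finset.sum_congr rfl fun j _ => ?_
    rw [← Finset.sum_mul, hnorm j, one_mul]
  have hsumy : ∑ j, y j ≤ L := by
    rw [hy]; unfold emStep
    have hrw : ∑ j, x j * ∑ i, A i j * I i / (A.mulVec x i + BG i)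
        = ∑ i, I i / (A.mulVec x i + BG i) * A.mulVec x i := by
      simp only [Finset.mul_sum]
      rw [Finset.sum_comm]
      refine Finset.sum_congr rfl fun i _ => ?_
      simp only [Matrix.mulVec, dotProduct, Finset.mul_sum]
      refine Finset.sum_congr rfl fun j _ => ?_
      ring
    rw [hrw]
    apply Finset.sum_le_sum
    intro i _
    calc I i / (A.mulVec x i + BG i) * A.mulVec x i
        ≤ I i / (A.mulVec x i + BG i) * (A.mulVec x i + BG i) := by
          apply mul_le_mul_of_nonneg_left (by linarith [hBG i])
            (div_nonneg (hI i) (hden i).le)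
      _ = I i := div_mul_cancel₀ _ (hden i).ne'
  have hQ : klkktQ A BG y ≤ L := by
    unfold klkktQ
    calc ∑ i, (A.mulVec y i) ^ 2 / (A.mulVec y i + BG i) ≤ ∑ i, A.mulVec y i := by
          apply Finset.sum_le_sum; intro i _
          rw [div_le_iff₀ (hdeny i)]
          nlinarith [hAy0 i, hBG i]
      _ = ∑ j, y j := hsumAy
      _ ≤ L := hsumy
  have hscale : klkktP A (L⁻¹ • I) (L⁻¹ • BG) (L⁻¹ • y)
      = L⁻¹ ^ 2 * klkktP A I BG y := by
    unfold klkktP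
    rw [Finset.mul_sum]
    refine Finset.sum_congr rfl fun j _ => ?_
    rw [Matrix.mulVec_smul]
    have hinner : ∀ i, L⁻¹ * I i / (L⁻¹ * A.mulVec y i + L⁻¹ * BG i)
        = I i / (A.mulVec y i + BG i) := by
      intro i
      rw [← mul_add, mul_div_mul_left _ _ (inv_ne_zero hL0)]
    simp only [Pi.smul_apply, smul_eq_mul, hinner]
    ring
  have hP : klkktP A I BG y ≤ τ * L :=
    hstop.trans (by nlinarith)
  rw [hscale]
  calc L⁻¹ ^ 2 * klkktP A I BG y ≤ L⁻¹ ^ 2 * (τ * L) := by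
        apply mul_le_mul_of_nonneg_left hP (by positivity)
    _ = τ / L := by field_simp
end
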